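/- As κ → ∞, the two-parameter copula converges pointwise to the Gumbel copula: for fixed u, v ∈ (0,1) and α ∈ (0,1], lim_{κ→∞} C_{α,κ}(u,v) = exp(-((-log u)^{1/α} + (-log v)^{1/α})^{α}). -/
import Mathlib

open Filter Real Topology

noncomputable def twoParamCopula (α κ u v : ℝ) : ℝ :=
  (1 + ((u ^ (-(1/κ)) - 1) ^ (1/α) + (v ^ (-(1/κ)) - 1) ^ (1/α)) ^ α) ^ (-κ)

/-- The slope limit: κ ↦ κ(exp(c/κ)-1) tends to c. -/
lemma aux_slope (c : ℝ) :
    Tendsto (fun κ : ℝ => κ * (Real.exp (c * (1/κ)) - 1)) atTop (𝓝 c) := by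
  have hd : HasDerivAt (fun t : ℝ => Real.exp (c * t)) c 0 := by
    simpa using ((hasDerivAt_id (0:ℝ)).const_mul c).exp
  rw [hasDerivAt_iff_tendsto_slope] at hd
  have h1 : Tendsto (fun κ : ℝ => 1/κ) atTop (𝓝[≠] (0:ℝ)) := by
    apply tendsto_nhdsWithin_of_tendsto_nhds_of_eventually_within
    · simpa [one_div] using tendsto_inv_atTop_zero
    · filter_upwards [eventually_gt_atTop (0:ℝ)] with κ hκ
      exact (one_div_pos.mpr hκ).ne'
  refine (hd.comp h1).congr' ?_
  filter_upwards [eventually_gt_atTop (0:ℝ)] with κ hκ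
  have h1κ : (1:ℝ)/κ ≠ 0 := (one_div_pos.mpr hκ).ne'
  simp only [Function.comp_apply, slope_def_field, div_sub_div_same, mul_zero,
    Real.exp_zero, sub_zero]
  rw [div_div_eq_mul_div]
  field_simp


theorem twoParamCopula_tendsto_gumbel (α u v : ℝ) (hα : α ∈ Set.Ioc (0:ℝ) 1)
    (hu : u ∈ Set.Ioo (0:ℝ) 1) (hv : v ∈ Set.Ioo (0:ℝ) 1) :
    Filter.Tendsto (fun κ => twoParamCopula α κ u v) Filter.atTop
      (nhds (Real.exp (-((-Real.log u) ^ (1/α) + (-Real.log v) ^ (1/α)) ^ α))) := by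
  obtain ⟨hα0, hα1⟩ := hα
  obtain ⟨hu0, hu1⟩ := hu
  obtain ⟨hv0, hv1⟩ := hv
  set cu : ℝ := -Real.log u with hcu
  set cv : ℝ := -Real.log v with hcv
  have hcu0 : 0 < cu := by simpa [hcu] using Real.log_neg hu0 hu1
  have hcv0 : 0 < cv := by simpa [hcv] using Real.log_neg hv0 hv1
  set a : ℝ → ℝ := fun κ => u ^ (-(1/κ)) - 1 with ha
  set b : ℝ → ℝ := fun κ => v ^ (-(1/κ)) - 1 with hb
  set g : ℝ → ℝ := fun κ => (a κ ^ (1/α) + b κ ^ (1/α)) ^ α with hg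
  set S : ℝ := cu ^ (1/α) + cv ^ (1/α) with hS
  have hS0 : 0 < S := by positivity
  -- basic positivity facts, eventually
  have haeq : ∀ κ : ℝ, a κ = Real.exp (cu * (1/κ)) - 1 := by
    intro κ
    simp only [ha]
    rw [Real.rpow_def_of_pos hu0, hcu]
    ring_nf
  have hbeq : ∀ κ : ℝ, b κ = Real.exp (cv * (1/κ)) - 1 := by
    intro κ
    simp only [hb]
    rw [Real.rpow_def_of_pos hv0, hcv]
    ring_nf
  have hapos : ∀ κ : ℝ, 0 < κ → 0 < a κ := by
    intro κ hκ
    rw [haeq]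
    have h1 : (0:ℝ) < cu * (1/κ) := by positivity
    simpa using Real.one_lt_exp_iff.mpr h1
  have hbpos : ∀ κ : ℝ, 0 < κ → 0 < b κ := by
    intro κ hκ
    rw [hbeq]
    have h1 : (0:ℝ) < cv * (1/κ) := by positivity
    simpa using Real.one_lt_exp_iff.mpr h1
  have hgpos : ∀ κ : ℝ, 0 < κ → 0 < g κ := by
    intro κ hκ
    have h1 := Real.rpow_pos_of_pos (hapos κ hκ) (1/α)
    have h2 := Real.rpow_pos_of_pos (hbpos κ hκ) (1/α)
    exact Real.rpow_pos_of_pos (by linarith) α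
  -- Step 1: κ * a κ → cu, κ * b κ → cv
  have hka : Tendsto (fun κ => κ * a κ) atTop (𝓝 cu) := by
    refine (aux_slope cu).congr fun κ => ?_
    rw [haeq]
  have hkb : Tendsto (fun κ => κ * b κ) atTop (𝓝 cv) := by
    refine (aux_slope cv).congr fun κ => ?_
    rw [hbeq]
  -- Step 2-4: κ * g κ → S ^ α
  have hsum : Tendsto (fun κ => (κ * a κ) ^ (1/α) + (κ * b κ) ^ (1/α)) atTop (𝓝 S) :=
    (hka.rpow_const (Or.inl hcu0.ne')).add (hkb.rpow_const (Or.inl hcv0.ne'))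
  have hkg : Tendsto (fun κ => κ * g κ) atTop (𝓝 (S ^ α)) := by
    refine (hsum.rpow_const (Or.inr hα0.le)).congr' ?_
    filter_upwards [eventually_gt_atTop (0:ℝ)] with κ hκ
    have h1 : (κ * a κ) ^ (1/α) = κ ^ (1/α) * a κ ^ (1/α) :=
      Real.mul_rpow hκ.le (hapos κ hκ).le
    have h2 : (κ * b κ) ^ (1/α) = κ ^ (1/α) * b κ ^ (1/α) :=
      Real.mul_rpow hκ.le (hbpos κ hκ).le
    rw [h1, h2, ← mul_add, Real.mul_rpow (Real.rpow_nonneg hκ.le _)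
      (add_nonneg (Real.rpow_nonneg (hapos κ hκ).le _) (Real.rpow_nonneg (hbpos κ hκ).le _)),
      ← Real.rpow_mul hκ.le, one_div, inv_mul_cancel₀ hα0.ne', Real.rpow_one]
    simp only [hg, one_div]
  -- Step 5: g → 0
  have hg0 : Tendsto g atTop (𝓝 0) := by
    have := hkg.mul tendsto_inv_atTop_zero
    rw [mul_zero] at this
    refine this.congr' ?_
    filter_upwards [eventually_gt_atTop (0:ℝ)] with κ hκ
    field_simp
  -- Step 6: log(1+g)/g → 1
  have hlog1 : Tendsto (fun x : ℝ => Real.log (1 + x) / x) (𝓝[≠] (0:ℝ)) (𝓝 1) := by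
    have hd : HasDerivAt (fun x : ℝ => Real.log (1 + x)) 1 0 := by
      have := ((hasDerivAt_id (0:ℝ)).const_add 1).log (by norm_num)
      simpa using this
    rw [hasDerivAt_iff_tendsto_slope] at hd
    refine hd.congr fun x => ?_
    simp [slope_def_field]
  have hgne : Tendsto g atTop (𝓝[≠] (0:ℝ)) := by
    apply tendsto_nhdsWithin_of_tendsto_nhds_of_eventually_within _ hg0
    filter_upwards [eventually_gt_atTop (0:ℝ)] with κ hκ
    exact (hgpos κ hκ).ne'
  have hratio : Tendsto (fun κ => Real.log (1 + g κ) / g κ) atTop (𝓝 1) :=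
    hlog1.comp hgne
  -- Step 7: -κ * log(1+g) → -S^α
  have hmain : Tendsto (fun κ => Real.log (1 + g κ) * (-κ)) atTop (𝓝 (-(S ^ α))) := by
    have := (hkg.mul hratio).neg
    rw [mul_one] at this
    refine this.congr' ?_
    filter_upwards [eventually_gt_atTop (0:ℝ)] with κ hκ
    have := (hgpos κ hκ).ne'
    field_simp
  -- Step 8: conclude
  have := (Real.continuous_exp.tendsto _).comp hmain
  refine this.congr' ?_
  filter_upwards [eventually_gt_atTop (0:ℝ)] with κ hκ
  have h1g : (0:ℝ) < 1 + g κ := by linarith [hgpos κ hκ]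
  simp only [Function.comp_apply, twoParamCopula]
  rw [Real.rpow_def_of_pos h1g]
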